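/- Let r ≥ r* ≥ 1 be integers and set δ_crit := 1/(1 + √(r*/r)). Then for every real δ with 0 ≤ δ ≤ δ_crit, one has √(1 + (r*/r)·((1+δ)/2)²) − √(r*/r)·(1+δ)/2 ≥ δ_crit; equivalently, √(1 + (r*/r)·((1+δ)/2)²) − √(r*/r)·(1+δ)/2 − δ ≥ δ_crit − δ. In particular, the function δ ↦ √(1 + (r*/r)·((1+δ)/2)²) − √(r*/r)·(1+δ)/2 is nonincreasing in δ and takes the value δ_crit at δ = δ_crit. -/

import Mathlib

noncomputable section

open Matrix

attribute [local instance] Matrix.normedAddCommGroup Matrix.normedSpace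

/-- Euclidean norm on `ℝⁿ`. -/
def enorm {n : ℕ} (x : Fin n → ℝ) : ℝ := Real.sqrt (∑ i, x i ^ 2)

/-- Frobenius norm of a real matrix. -/
def frob {m n : ℕ} (A : Matrix (Fin m) (Fin n) ℝ) : ℝ := Real.sqrt (∑ i, ∑ j, A i j ^ 2)

/-- Trace inner product `⟨A,B⟩ = tr(AᵀB)`. -/
def tip {m n : ℕ} (A B : Matrix (Fin m) (Fin n) ℝ) : ℝ := ∑ i, ∑ j, A i j * B i j

/-- Spectral (operator) norm: largest singular value. -/
def opNorm {m n : ℕ} (A : Matrix (Fin m) (Fin n) ℝ) : ℝ :=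
  sSup {t | ∃ x : Fin n → ℝ, _root_.enorm x ≤ 1 ∧ t = _root_.enorm (A.mulVec x)}

/-- Nuclear norm: `tr √(AᴴA)`, the sum of the singular values. -/
def nucNorm {m n : ℕ} (A : Matrix (Fin m) (Fin n) ℝ) : ℝ :=
  ((Matrix.posSemidef_conjTranspose_mul_self A).1.eigenvectorUnitary.1 *
    Matrix.diagonal ((RCLike.ofReal : ℝ → ℝ) ∘ (Real.sqrt ∘ (Matrix.posSemidef_conjTranspose_mul_self A).1.eigenvalues)) *
    (star (Matrix.posSemidef_conjTranspose_mul_self A).1.eigenvectorUnitary : Matrix (Fin n) (Fin n) ℝ)).trace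

/-- The `j`-th largest singular value of a real matrix (`1`-indexed):
the list of square roots of eigenvalues of `AᴴA`, sorted in decreasing order. -/
def singVal {m n : ℕ} (A : Matrix (Fin m) (Fin n) ℝ) (j : ℕ) : ℝ :=
  (((List.ofFn ((by simpa using Matrix.isHermitian_conjTranspose_mul_self A : (Aᵀ * A).IsHermitian).eigenvalues)).map
      Real.sqrt).insertionSort (· ≥ ·)).getD (j - 1) 0

/-- A second-order critical point of `f`: zero gradient and positive-semidefinite
Hessian quadratic form. -/
def IsSecondOrderCriticalPoint {E : Type*} [NormedAddCommGroup E] [NormedSpace ℝ E]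
    (f : E → ℝ) (x : E) : Prop :=
  fderiv ℝ f x = 0 ∧ ∀ v : E, 0 ≤ fderiv ℝ (fun y => fderiv ℝ f y v) x v

/-- The gradient of `φ` at `M`, w.r.t. the trace inner product. -/
def gradM {m n : ℕ} (φ : Matrix (Fin m) (Fin n) ℝ → ℝ) (M : Matrix (Fin m) (Fin n) ℝ) :
    Matrix (Fin m) (Fin n) ℝ :=
  Matrix.of fun i j => fderiv ℝ φ M (Matrix.single i j 1)

/-- Hessian quadratic form `∇²φ(M)[E,E]`. -/
def hess {m n : ℕ} (φ : Matrix (Fin m) (Fin n) ℝ → ℝ) (M E : Matrix (Fin m) (Fin n) ℝ) : ℝ :=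
  fderiv ℝ (fun N => fderiv ℝ φ N E) M E

/-- Adjoint of a linear measurement map, w.r.t. the trace inner product. -/
def adj {m n p : ℕ} (A : Matrix (Fin m) (Fin n) ℝ →ₗ[ℝ] (Fin p → ℝ)) (ξ : Fin p → ℝ) :
    Matrix (Fin m) (Fin n) ℝ :=
  Matrix.of fun i j => ∑ k, ξ k * A (Matrix.single i j 1) k

/-- The subspace `S_d` of `d × d` real symmetric matrices. -/
def SymSpace (d : ℕ) : Submodule ℝ (Matrix (Fin d) (Fin d) ℝ) where
  carrier := {A | Aᵀ = A}
  add_mem' := by intro a b ha hb; simp only [Set.mem_setOf_eq, Matrix.transpose_add] at *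
                 rw [ha, hb]
  zero_mem' := by simp
  smul_mem' := by intro c A hA; simp only [Set.mem_setOf_eq, Matrix.transpose_smul] at *
                  rw [hA]

lemma mem_symSpace {d : ℕ} {A : Matrix (Fin d) (Fin d) ℝ} : A ∈ SymSpace d ↔ Aᵀ = A := Iff.rfl

lemma stdBasis_symm {d : ℕ} (i j : Fin d) :
    Matrix.single i j (1:ℝ) + Matrix.single j i 1 ∈ SymSpace d := by
  rw [mem_symSpace, Matrix.transpose_add]
  ext a b
  simp only [Matrix.add_apply, Matrix.transpose_apply, Matrix.single, Matrix.of_apply]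
  rw [add_comm]
  congr 1 <;> · congr 1; rw [eq_iff_iff, and_comm]

/-- The symmetrized elementary matrix `E_ij + E_ji` as an element of `S_d`. -/
def symBasis {d : ℕ} (i j : Fin d) : SymSpace d :=
  ⟨Matrix.single i j 1 + Matrix.single j i 1, stdBasis_symm i j⟩

lemma mmT_mem {d r : ℕ} (U : Matrix (Fin d) (Fin r) ℝ) : U * Uᵀ ∈ SymSpace d := by
  rw [mem_symSpace, Matrix.transpose_mul, Matrix.transpose_transpose]

/-- `U ↦ UUᵀ` as an element of `S_d`. -/
def mmT {d r : ℕ} (U : Matrix (Fin d) (Fin r) ℝ) : SymSpace d := ⟨U * Uᵀ, mmT_mem U⟩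

/-- The gradient of `φ : S_d → ℝ` at `M`, as the symmetric matrix representing the
derivative w.r.t. the trace inner product on `S_d`. -/
def gradS {d : ℕ} (φ : SymSpace d → ℝ) (M : SymSpace d) : Matrix (Fin d) (Fin d) ℝ :=
  Matrix.of fun i j => (1/2) * fderiv ℝ φ M (symBasis i j)

/-- Hessian quadratic form of `φ : S_d → ℝ`. -/
def hessS {d : ℕ} (φ : SymSpace d → ℝ) (M E : SymSpace d) : ℝ :=
  fderiv ℝ (fun N => fderiv ℝ φ N E) M E

/-- Adjoint of a linear map `𝒜 : S_d → ℝⁿ` w.r.t. the trace inner product on `S_d`. -/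
def adjS {d p : ℕ} (A : SymSpace d →ₗ[ℝ] (Fin p → ℝ)) (ξ : Fin p → ℝ) :
    Matrix (Fin d) (Fin d) ℝ :=
  Matrix.of fun i j => (1/2) * ∑ k, ξ k * A (symBasis i j) k

/-- `P` is the orthogonal projection matrix onto the column space of `U`:
it is symmetric, idempotent, and has the same range as `U`. -/
def IsOrthProjCol {d r : ℕ} (P : Matrix (Fin d) (Fin d) ℝ) (U : Matrix (Fin d) (Fin r) ℝ) :
    Prop :=
  Pᵀ = P ∧ P * P = P ∧ P * U = U ∧ ∃ W : Matrix (Fin r) (Fin d) ℝ, P = U * W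

/-! With `c = √(r*/r)` the expression is `g (c (1 + δ) / 2)` for `g x = √(1 + x²) - x`, which is
decreasing because `√(1 + x²)` grows with slope less than one. At `δ = 1 / (1 + c)` the radicand
`1 + x²` is the perfect square `((c² + 2c + 2) / (2 (1 + c)))²`, and the difference collapses to
`1 / (1 + c)`. -/

theorem antitone_sqrt_one_add_sq_sub_self : Antitone fun x : ℝ => √(1 + x ^ 2) - x := by
  intro a b hab
  have hs := Real.sq_sqrt (by positivity : (0 : ℝ) ≤ 1 + a ^ 2)
  have ht := Real.sq_sqrt (by positivity : (0 : ℝ) ≤ 1 + b ^ 2)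
  have hs0 := Real.sqrt_nonneg (1 + a ^ 2)
  have ht0 := Real.sqrt_nonneg (1 + b ^ 2)
  have has : a < √(1 + a ^ 2) := by nlinarith
  have hbt : b < √(1 + b ^ 2) := by nlinarith
  -- `(t - s)(t + s) = (b - a)(b + a) ≤ (b - a)(t + s)` for `s = √(1 + a²)`, `t = √(1 + b²)`
  nlinarith [mul_le_mul_of_nonneg_left (add_le_add hbt.le has.le) (sub_nonneg.2 hab)]

theorem antitone_sqrt_one_add_sq_mul_sub {c : ℝ} (hc : 0 ≤ c) :
    Antitone fun δ : ℝ => √(1 + c ^ 2 * ((1 + δ) / 2) ^ 2) - c * ((1 + δ) / 2) := by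
  have hcomp : (fun δ : ℝ => √(1 + c ^ 2 * ((1 + δ) / 2) ^ 2) - c * ((1 + δ) / 2)) =
      (fun x : ℝ => √(1 + x ^ 2) - x) ∘ fun δ => c * ((1 + δ) / 2) := by
    ext δ
    simp only [Function.comp_apply, mul_pow]
  rw [hcomp]
  exact antitone_sqrt_one_add_sq_sub_self.comp_monotone fun a b hab => by gcongr

theorem sqrt_one_add_sq_mul_sub_at_inv_one_add {c : ℝ} (hc : 0 ≤ c) :
    √(1 + c ^ 2 * ((1 + 1 / (1 + c)) / 2) ^ 2) - c * ((1 + 1 / (1 + c)) / 2) = 1 / (1 + c) := by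
  have hc1 : 0 < 1 + c := by linarith
  have hsquare : 1 + c ^ 2 * ((1 + 1 / (1 + c)) / 2) ^ 2 =
      ((c ^ 2 + 2 * c + 2) / (2 * (1 + c))) ^ 2 := by
    field_simp
    ring
  rw [hsquare, Real.sqrt_sq (by positivity)]
  field_simp
  ring

theorem delta_crit_calculation_general
    (r rs : ℕ) :
    (∀ δ : ℝ, 0 ≤ δ → δ ≤ 1 / (1 + Real.sqrt ((rs:ℝ)/r)) →
      1 / (1 + Real.sqrt ((rs:ℝ)/r)) ≤
        Real.sqrt (1 + (rs:ℝ)/r * ((1 + δ)/2)^2) - Real.sqrt ((rs:ℝ)/r) * ((1 + δ)/2) ∧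
      1 / (1 + Real.sqrt ((rs:ℝ)/r)) - δ ≤
        Real.sqrt (1 + (rs:ℝ)/r * ((1 + δ)/2)^2) - Real.sqrt ((rs:ℝ)/r) * ((1 + δ)/2) - δ) ∧
    Antitone (fun δ : ℝ =>
      Real.sqrt (1 + (rs:ℝ)/r * ((1 + δ)/2)^2) - Real.sqrt ((rs:ℝ)/r) * ((1 + δ)/2)) ∧
    Real.sqrt (1 + (rs:ℝ)/r * ((1 + 1 / (1 + Real.sqrt ((rs:ℝ)/r)))/2)^2)
        - Real.sqrt ((rs:ℝ)/r) * ((1 + 1 / (1 + Real.sqrt ((rs:ℝ)/r)))/2)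
      = 1 / (1 + Real.sqrt ((rs:ℝ)/r)) := by
  set c := Real.sqrt ((rs:ℝ)/r)
  have hc : 0 ≤ c := Real.sqrt_nonneg _
  rw [show (rs:ℝ)/r = c ^ 2 from (Real.sq_sqrt (by positivity)).symm]
  refine ⟨fun δ _ hδ => ?_, antitone_sqrt_one_add_sq_mul_sub hc,
    sqrt_one_add_sq_mul_sub_at_inv_one_add hc⟩
  have hcrit := antitone_sqrt_one_add_sq_mul_sub hc hδ
  simp only [sqrt_one_add_sq_mul_sub_at_inv_one_add hc] at hcrit
  exact ⟨hcrit, by linarith⟩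

/-- Lemma: the RIP threshold calculation. -/
theorem delta_crit_calculation
    (r rs : ℕ) (hrs : 1 ≤ rs) (hr : rs ≤ r) :
    (∀ δ : ℝ, 0 ≤ δ → δ ≤ 1 / (1 + Real.sqrt ((rs:ℝ)/r)) →
      1 / (1 + Real.sqrt ((rs:ℝ)/r)) ≤
        Real.sqrt (1 + (rs:ℝ)/r * ((1 + δ)/2)^2) - Real.sqrt ((rs:ℝ)/r) * ((1 + δ)/2) ∧
      1 / (1 + Real.sqrt ((rs:ℝ)/r)) - δ ≤
        Real.sqrt (1 + (rs:ℝ)/r * ((1 + δ)/2)^2) - Real.sqrt ((rs:ℝ)/r) * ((1 + δ)/2) - δ) ∧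
    Antitone (fun δ : ℝ =>
      Real.sqrt (1 + (rs:ℝ)/r * ((1 + δ)/2)^2) - Real.sqrt ((rs:ℝ)/r) * ((1 + δ)/2)) ∧
    Real.sqrt (1 + (rs:ℝ)/r * ((1 + 1 / (1 + Real.sqrt ((rs:ℝ)/r)))/2)^2)
        - Real.sqrt ((rs:ℝ)/r) * ((1 + 1 / (1 + Real.sqrt ((rs:ℝ)/r)))/2)
      = 1 / (1 + Real.sqrt ((rs:ℝ)/r)) :=
  delta_crit_calculation_general r rs

end
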